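/- arXiv:2306.07642 — 3 statements merged into one kernel-verified Lean document; each statement's English description precedes it below -/
import Mathlib

section
/- Let Φ : M_d(ℂ) → M_n(ℂ) be unital with Φ(X) = ∑_{i=1}^k φ_i(X) P_i, where the φ_i are distinct pure states on M_d(ℂ) and the P_i are mutually orthogonal nonzero projections summing to I_n. Suppose Ψ : M_d(ℂ) → M_m(ℂ) is a map in Holevo form Ψ(X) = ∑_{j=1}^ℓ ψ_j(X) R_j with distinct states ψ_j, R_j ⪰ 0, ∑ R_j = I_m, and V : ℂⁿ → ℂ^m is an isometry with V* Ψ(X) V = Φ(X) for all X. Then Ψ(X)(V x) ∈ V(ℂⁿ) for every x ∈ ℂⁿ and every X ∈ M_d(ℂ), i.e., the dilation is trivial. -/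
open Matrix BigOperators
open scoped ComplexOrder

noncomputable section

/-- A state on `M_d(ℂ)`: a unital positive linear functional. -/
def IsState (d : ℕ) (φ : Matrix (Fin d) (Fin d) ℂ →ₗ[ℂ] ℂ) : Prop :=
  φ 1 = 1 ∧ ∀ A : Matrix (Fin d) (Fin d) ℂ, A.PosSemidef → 0 ≤ φ A

/-- A pure (extreme) state: it admits no proper convex decomposition into distinct states. -/
def IsPureState (d : ℕ) (φ : Matrix (Fin d) (Fin d) ℂ →ₗ[ℂ] ℂ) : Prop :=
  IsState d φ ∧ ∀ (σ τ : Matrix (Fin d) (Fin d) ℂ →ₗ[ℂ] ℂ) (t : ℝ),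
    IsState d σ → IsState d τ → 0 < t → t < 1 →
    (∀ X, φ X = (t : ℂ) * σ X + ((1 - t : ℝ) : ℂ) * τ X) → σ = τ

open Finset

/-!
Let `u` lie in the range of `P i`, so that `⟨u, Φ(X) u⟩ = φᵢ(X) ‖u‖²`. Compressing by `V`,
`X ↦ ⟨V u, Ψ(X) V u⟩ = ∑ⱼ ⟨V u, Rⱼ V u⟩ ψⱼ(X)` is a nonnegative combination of the states `ψⱼ`
equal to a multiple of the pure state `φᵢ`; by extremality every `ψⱼ ≠ φᵢ` has coefficient
`⟨V u, Rⱼ V u⟩ = 0`, i.e. `Rⱼ V u = 0`. Since `∑ Rⱼ = 1`, this makes `V u` an eigenvector of every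
`Ψ(X)` with eigenvalue `φᵢ(X)`, so `Ψ(X) V x = V Φ(X) x` after splitting `x = ∑ᵢ Pᵢ x`.
-/

section States

variable {d : ℕ}

lemma IsState.inv_smul_sum_smul {ι : Type*} (s : Finset ι)
    {ψ : ι → Matrix (Fin d) (Fin d) ℂ →ₗ[ℂ] ℂ} (hψ : ∀ j ∈ s, IsState d (ψ j))
    {c : ι → ℝ} (hc : ∀ j ∈ s, 0 ≤ c j) (hpos : 0 < ∑ j ∈ s, c j) :
    IsState d (((∑ j ∈ s, c j : ℝ) : ℂ)⁻¹ • ∑ j ∈ s, (c j : ℂ) • ψ j) := by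
  refine ⟨?_, fun A hA => ?_⟩
  · simp only [LinearMap.smul_apply, LinearMap.sum_apply, smul_eq_mul]
    rw [Finset.sum_congr rfl (g := fun j => (c j : ℂ)) fun j hj => by rw [(hψ j hj).1, mul_one],
      ← Complex.ofReal_sum]
    exact inv_mul_cancel₀ (by exact_mod_cast hpos.ne')
  · simp only [LinearMap.smul_apply, LinearMap.sum_apply, smul_eq_mul]
    refine mul_nonneg ?_ (Finset.sum_nonneg fun j hj => ?_)
    · exact inv_nonneg.mpr (Complex.zero_le_real.mpr hpos.le)
    · exact mul_nonneg (Complex.zero_le_real.mpr (hc j hj)) ((hψ j hj).2 A hA)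

lemma IsPureState.eq_of_convex {φ σ τ : Matrix (Fin d) (Fin d) ℂ →ₗ[ℂ] ℂ}
    (hφ : IsPureState d φ) (hσ : IsState d σ) (hτ : IsState d τ) {t : ℝ} (ht₀ : 0 < t)
    (ht₁ : t < 1) (h : ∀ X, φ X = (t : ℂ) * σ X + ((1 - t : ℝ) : ℂ) * τ X) : φ = σ := by
  obtain rfl := hφ.2 σ τ t hσ hτ ht₀ ht₁ h
  ext X
  rw [h]
  push_cast
  ring

lemma IsPureState.coeff_eq_zero_of_sum_smul_eq_smul {ι : Type*} [Fintype ι]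
    {φ : Matrix (Fin d) (Fin d) ℂ →ₗ[ℂ] ℂ} (hφ : IsPureState d φ)
    {ψ : ι → Matrix (Fin d) (Fin d) ℂ →ₗ[ℂ] ℂ} (hψ : ∀ j, IsState d (ψ j))
    {c : ι → ℝ} (hc : ∀ j, 0 ≤ c j) {z : ℂ} (h : ∑ j, (c j : ℂ) • ψ j = z • φ)
    {j₀ : ι} (hj₀ : ψ j₀ ≠ φ) : c j₀ = 0 := by
  classical
  set r := ∑ j ∈ univ.erase j₀, c j with hr
  have hsplit : ∀ X, (c j₀ : ℂ) * ψ j₀ X + ∑ j ∈ univ.erase j₀, (c j : ℂ) * ψ j X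
      = z * φ X := fun X => by
    simpa only [LinearMap.add_apply, LinearMap.sum_apply, LinearMap.smul_apply, smul_eq_mul,
      ← add_sum_erase _ _ (mem_univ j₀)] using LinearMap.congr_fun h X
  have hz : z = c j₀ + r := by simpa [(hψ _).1, hφ.1.1, hr] using (hsplit 1).symm
  by_contra hne
  have hc₀ : 0 < c j₀ := (hc j₀).lt_of_ne' hne
  obtain hr₀ | hr₀ := (show 0 ≤ r from sum_nonneg fun j _ => hc j).eq_or_lt
  · have hrest : ∀ j ∈ univ.erase j₀, c j = 0 :=
      (sum_eq_zero_iff_of_nonneg fun j _ => hc j).1 hr₀.symm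
    refine hj₀ (LinearMap.ext fun X => mul_left_cancel₀ (b := ψ j₀ X)
      (Complex.ofReal_ne_zero.2 hc₀.ne') ?_)
    rw [← hr₀, Complex.ofReal_zero, add_zero] at hz
    have := hsplit X
    rwa [sum_eq_zero fun j hj => by rw [hrest j hj, Complex.ofReal_zero, zero_mul], add_zero,
      hz] at this
  · have hτ := IsState.inv_smul_sum_smul _ (fun j _ => hψ j) (fun j _ => hc j) hr₀
    have ht : c j₀ / (c j₀ + r) < 1 := (div_lt_one (by positivity)).2 (by linarith)
    refine hj₀ (hφ.eq_of_convex (hψ j₀) hτ (by positivity) ht fun X => ?_).symm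
    have hz₀ : (c j₀ + r : ℂ) ≠ 0 := by exact_mod_cast (by positivity : c j₀ + r ≠ 0)
    have hr' : (r : ℂ) ≠ 0 := by exact_mod_cast hr₀.ne'
    simp only [LinearMap.smul_apply, LinearMap.sum_apply, smul_eq_mul, ← hr]
    rw [← inv_mul_cancel_left₀ hz₀ (φ X), ← hz, ← hsplit X, hz]
    push_cast
    field_simp
    ring

end States

lemma OrthogonalIdempotents.sum_smul_mul {R A I : Type*} [Semiring R] [Semiring A] [Module R A]
    [IsScalarTower R A A] [Fintype I] {e : I → A} (he : OrthogonalIdempotents e) (a : I → R)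
    (i : I) : (∑ j, a j • e j) * e i = a i • e i := by
  rw [Finset.sum_mul, sum_eq_single i (fun j _ hji => by rw [smul_mul_assoc, he.ortho hji,
    smul_zero]) (by simp), smul_mul_assoc, (he.idem i).eq]

lemma star_mulVec_dotProduct_mulVec_mulVec {α m n : Type*} [CommSemiring α] [StarRing α]
    [Fintype m] [Fintype n] (V : Matrix m n α) (M : Matrix m m α) (u : n → α) :
    star (V *ᵥ u) ⬝ᵥ (M *ᵥ (V *ᵥ u)) = star u ⬝ᵥ ((Vᴴ * M * V) *ᵥ u) := by
  simp only [star_mulVec, dotProduct_mulVec, vecMul_vecMul, Matrix.mul_assoc]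

section HolevoForm

variable {d : ℕ} {ι m : Type*} [Fintype ι] [Fintype m]
  {ψ : ι → Matrix (Fin d) (Fin d) ℂ →ₗ[ℂ] ℂ} {R : ι → Matrix m m ℂ}
  {φ : Matrix (Fin d) (Fin d) ℂ →ₗ[ℂ] ℂ} {w : m → ℂ} {z : ℂ}

lemma mulVec_eq_zero_of_ne_of_isPureState (hψ : ∀ j, IsState d (ψ j))
    (hR : ∀ j, (R j).PosSemidef) (hφ : IsPureState d φ)
    (hw : ∀ X, star w ⬝ᵥ ((∑ j, ψ j X • R j) *ᵥ w) = z * φ X) {j₀ : ι} (hj₀ : ψ j₀ ≠ φ) :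
    R j₀ *ᵥ w = 0 := by
  choose c hc₀ hc using fun j => RCLike.nonneg_iff_exists_ofReal.1
    ((hR j).dotProduct_mulVec_nonneg w)
  simp only [Complex.coe_algebraMap] at hc
  have hsum : ∑ j, (c j : ℂ) • ψ j = z • φ := by
    ext X
    simp only [LinearMap.sum_apply, LinearMap.smul_apply, smul_eq_mul, hc, ← hw X, sum_mulVec,
      dotProduct_sum, smul_mulVec, dotProduct_smul, mul_comm]
  rw [← (hR j₀).dotProduct_mulVec_zero_iff, ← hc,
    hφ.coeff_eq_zero_of_sum_smul_eq_smul hψ hc₀ hsum hj₀, Complex.ofReal_zero]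

lemma sum_smul_mulVec_eq_smul_of_isPureState [DecidableEq m] (hψ : ∀ j, IsState d (ψ j))
    (hR : ∀ j, (R j).PosSemidef) (hRsum : ∑ j, R j = 1) (hφ : IsPureState d φ)
    (hw : ∀ X, star w ⬝ᵥ ((∑ j, ψ j X • R j) *ᵥ w) = z * φ X) (X : Matrix (Fin d) (Fin d) ℂ) :
    (∑ j, ψ j X • R j) *ᵥ w = φ X • w := by
  have hterm : ∀ j, (ψ j X • R j) *ᵥ w = φ X • R j *ᵥ w := fun j => by
    by_cases hj : ψ j = φ
    · rw [hj, smul_mulVec]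
    · rw [smul_mulVec, mulVec_eq_zero_of_ne_of_isPureState hψ hR hφ hw hj, smul_zero, smul_zero]
  rw [sum_mulVec, sum_congr rfl fun j _ => hterm j, ← smul_sum, ← sum_mulVec, hRsum, one_mulVec]

end HolevoForm

theorem stmt9_general {d n m k ℓ : ℕ}
    (Φ : Matrix (Fin d) (Fin d) ℂ →ₗ[ℂ] Matrix (Fin n) (Fin n) ℂ)
    (Ψ : Matrix (Fin d) (Fin d) ℂ →ₗ[ℂ] Matrix (Fin m) (Fin m) ℂ)
    (φ : Fin k → (Matrix (Fin d) (Fin d) ℂ →ₗ[ℂ] ℂ))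
    (P : Fin k → Matrix (Fin n) (Fin n) ℂ)
    (hφ : ∀ i, IsPureState d (φ i))
    (horth : ∀ i j, i ≠ j → P i * P j = 0)
    (hPsum : ∑ i, P i = 1)
    (hΦ : ∀ X, Φ X = ∑ i, φ i X • P i)
    (ψ : Fin ℓ → (Matrix (Fin d) (Fin d) ℂ →ₗ[ℂ] ℂ))
    (R : Fin ℓ → Matrix (Fin m) (Fin m) ℂ)
    (hψ : ∀ j, IsState d (ψ j))
    (hR : ∀ j, (R j).PosSemidef)
    (hRsum : ∑ j, R j = 1)
    (hΨ : ∀ X, Ψ X = ∑ j, ψ j X • R j)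
    (V : Matrix (Fin m) (Fin n) ℂ)
    (hdil : ∀ X, Vᴴ * Ψ X * V = Φ X) :
    ∀ (X : Matrix (Fin d) (Fin d) ℂ) (x : Fin n → ℂ),
      ∃ y : Fin n → ℂ, Ψ X *ᵥ (V *ᵥ x) = V *ᵥ y := by
  intro X x
  have hP := (CompleteOrthogonalIdempotents.iff_ortho_complete.2
    ⟨fun i j hij => horth i j hij, hPsum⟩).toOrthogonalIdempotents
  have hx : ∑ i, P i *ᵥ x = x := by rw [← sum_mulVec, hPsum, one_mulVec]
  have hΦP : ∀ i Y, Φ Y *ᵥ (P i *ᵥ x) = φ i Y • P i *ᵥ x := fun i Y => by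
    rw [hΦ, mulVec_mulVec, hP.sum_smul_mul, smul_mulVec]
  have hΨVP : ∀ i, Ψ X *ᵥ (V *ᵥ (P i *ᵥ x)) = V *ᵥ (Φ X *ᵥ (P i *ᵥ x)) := fun i => by
    rw [hΦP, mulVec_smul, hΨ]
    refine sum_smul_mulVec_eq_smul_of_isPureState hψ hR hRsum (hφ i)
      (z := star (P i *ᵥ x) ⬝ᵥ (P i *ᵥ x)) (fun Y => ?_) X
    rw [← hΨ, star_mulVec_dotProduct_mulVec_mulVec, hdil, hΦP, dotProduct_smul, smul_eq_mul,
      mul_comm]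
  refine ⟨Φ X *ᵥ x, ?_⟩
  conv_lhs => rw [← hx]
  conv_rhs => rw [← hx]
  simp only [mulVec_sum, hΨVP]

theorem stmt9 {d n m k ℓ : ℕ}
    (Φ : Matrix (Fin d) (Fin d) ℂ →ₗ[ℂ] Matrix (Fin n) (Fin n) ℂ)
    (Ψ : Matrix (Fin d) (Fin d) ℂ →ₗ[ℂ] Matrix (Fin m) (Fin m) ℂ)
    (φ : Fin k → (Matrix (Fin d) (Fin d) ℂ →ₗ[ℂ] ℂ))
    (P : Fin k → Matrix (Fin n) (Fin n) ℂ)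
    (hΦunital : Φ 1 = 1)
    (hφ : ∀ i, IsPureState d (φ i))
    (hφdist : ∀ i j, φ i = φ j → i = j)
    (hproj : ∀ i, P i * P i = P i ∧ (P i)ᴴ = P i)
    (hPne : ∀ i, P i ≠ 0)
    (horth : ∀ i j, i ≠ j → P i * P j = 0)
    (hPsum : ∑ i, P i = 1)
    (hΦ : ∀ X, Φ X = ∑ i, φ i X • P i)
    (ψ : Fin ℓ → (Matrix (Fin d) (Fin d) ℂ →ₗ[ℂ] ℂ))
    (R : Fin ℓ → Matrix (Fin m) (Fin m) ℂ)
    (hψ : ∀ j, IsState d (ψ j))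
    (hψdist : ∀ j j', ψ j = ψ j' → j = j')
    (hR : ∀ j, (R j).PosSemidef)
    (hRsum : ∑ j, R j = 1)
    (hΨ : ∀ X, Ψ X = ∑ j, ψ j X • R j)
    (V : Matrix (Fin m) (Fin n) ℂ) (hV : Vᴴ * V = 1)
    (hdil : ∀ X, Vᴴ * Ψ X * V = Φ X) :
    ∀ (X : Matrix (Fin d) (Fin d) ℂ) (x : Fin n → ℂ),
      ∃ y : Fin n → ℂ, Ψ X *ᵥ (V *ᵥ x) = V *ᵥ y :=
  stmt9_general Φ Ψ φ P hφ horth hPsum hΦ ψ R hψ hR hRsum hΨ V hdil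
end
end

section
/- Let C ∈ M_d(ℂ) ⊗ M_n(ℂ) be positive semidefinite with rank n, partial trace over the first factor equal to an invertible matrix, and suppose C = ∑_{j=1}^m ξ_j ξ_j* where each ξ_j = x_j ⊗ y_j is a simple tensor. Then m ≥ n, and there exist simple tensors γ_1, …, γ_n ∈ ℂ^d ⊗ ℂⁿ such that C = ∑_{k=1}^n γ_k γ_k*. -/
/-!
Write `ξ j = x j ⊗ y j` and let `V` be the span of the `ξ j`, so that `dim V = rank C = n ≤ m`.
Choose a functional `φ` on `ℂ^d` vanishing at no nonzero `x j` and rescale the pairs so that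
`φ (x j) = 1` whenever `ξ j ≠ 0`. The contraction `φ ⊗ id` then sends `ξ j` to `y j`. Since the
partial trace of `C` is invertible, the `y j` span `ℂⁿ`, so `φ ⊗ id` maps `V` onto `ℂⁿ` and, by the
dimension count, injectively. Choosing `y (σ k)` to be a basis, injectivity gives
`ξ j = ∑ k, c j k • ξ (σ k)` with `c j` the coordinates of `y j`, and comparing this with
`x j ⊗ y j` forces `x (σ k) = x j` whenever `c j k ≠ 0`. Hence `C = B G Bᴴ`, where `B` has columns
`ξ (σ k)` and `G = ∑ j, c j (c j)ᴴ` is block diagonal for the partition of the indices `k` by the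
value of `x (σ k)`. The square root of `G` is block diagonal as well, and its columns `h k` give
`C = ∑ k, (B h k) (B h k)ᴴ`, where each `B h k` is again a simple tensor.
-/

open Matrix BigOperators
open scoped ComplexOrder

noncomputable section

section TensorVec

variable {R : Type*} [CommSemiring R] {α β ι : Type*}

def tensorVec (a : α → R) (b : β → R) : α × β → R := fun p => a p.1 * b p.2

infixr:100 " ⊗ᵥ " => tensorVec

@[simp]
lemma tensorVec_apply (a : α → R) (b : β → R) (p : α × β) : (a ⊗ᵥ b) p = a p.1 * b p.2 := rfl

@[simp]
lemma tensorVec_zero (a : α → R) : a ⊗ᵥ (0 : β → R) = 0 := by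
  ext p; simp

@[simp]
lemma zero_tensorVec (b : β → R) : (0 : α → R) ⊗ᵥ b = 0 := by
  ext p; simp

@[simp]
lemma smul_tensorVec (t : R) (a : α → R) (b : β → R) : (t • a) ⊗ᵥ b = t • (a ⊗ᵥ b) := by
  ext p; simp [mul_assoc]

@[simp]
lemma tensorVec_smul (t : R) (a : α → R) (b : β → R) : a ⊗ᵥ (t • b) = t • (a ⊗ᵥ b) := by
  ext p; simp [mul_left_comm]

lemma tensorVec_sum {κ : Type*} (a : α → R) (s : Finset κ) (f : κ → β → R) :
    a ⊗ᵥ (∑ k ∈ s, f k) = ∑ k ∈ s, a ⊗ᵥ f k := by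
  ext p; simp [Finset.mul_sum]

lemma tensorVec_sub {R : Type*} [CommRing R] (a a' : α → R) (b : β → R) :
    (a - a') ⊗ᵥ b = a ⊗ᵥ b - a' ⊗ᵥ b := by
  ext p; simp [sub_mul]

variable (β) in
def contractFst [Fintype α] (φ : α → R) : (α × β → R) →ₗ[R] β → R :=
  LinearMap.pi fun r => ∑ i, φ i • LinearMap.proj (i, r)

lemma contractFst_apply [Fintype α] (φ : α → R) (w : α × β → R) (r : β) :
    contractFst β φ w r = ∑ i, φ i * w (i, r) := by
  simp [contractFst]

lemma contractFst_tensorVec [Fintype α] (φ a : α → R) (b : β → R) :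
    contractFst β φ (a ⊗ᵥ b) = (φ ⬝ᵥ a) • b := by
  ext r
  simp [contractFst_apply, dotProduct, Finset.sum_mul, mul_assoc]

def Matrix.partialTraceFst [Fintype α] (C : Matrix (α × β) (α × β) R) : Matrix β β R :=
  of fun r s => ∑ i, C (i, r) (i, s)

lemma Matrix.partialTraceFst_sum_vecMulVec [Fintype α] [Fintype ι] [StarRing R]
    (x : ι → α → R) (y : ι → β → R) :
    partialTraceFst (∑ j, vecMulVec (x j ⊗ᵥ y j) (star (x j ⊗ᵥ y j)))
      = ∑ j, vecMulVec ((x j ⬝ᵥ star (x j)) • y j) (star (y j)) := by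
  ext r s
  simp only [partialTraceFst, of_apply, sum_apply, vecMulVec_apply, tensorVec_apply, Pi.star_apply,
    Pi.smul_apply, smul_eq_mul, dotProduct, star_mul', Finset.sum_mul]
  rw [Finset.sum_comm]
  refine Finset.sum_congr rfl fun j _ => Finset.sum_congr rfl fun i _ => ?_
  ring

end TensorVec

section StarRing

variable {R : Type*} [NonUnitalSemiring R] [StarRing R] {m κ : Type*} [Fintype κ]

lemma mul_conjTranspose_eq_sum_vecMulVec (M : Matrix m κ R) :
    M * Mᴴ = ∑ k, vecMulVec (Mᵀ k) (star (Mᵀ k)) := by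
  ext p q
  simp [Matrix.sum_apply, mul_apply, vecMulVec_apply]

lemma vecMulVec_mulVec_star (B : Matrix m κ R) (v : κ → R) :
    vecMulVec (B *ᵥ v) (star (B *ᵥ v)) = B * vecMulVec v (star v) * Bᴴ := by
  rw [mul_vecMulVec, vecMulVec_mul, star_mulVec]

end StarRing

section Field

variable {K : Type*} [Field K] {α β ι : Type*}

lemma LinearIndependent.eq_zero_of_sum_tensorVec_eq_zero {κ : Type*} [Fintype κ]
    {v : κ → β → K} (hv : LinearIndependent K v) {a : κ → α → K}
    (h : ∑ k, a k ⊗ᵥ v k = 0) : a = 0 := by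
  ext k i
  have hi : ∑ k, a k i • v k = 0 := by
    ext r
    simpa using congrFun h (i, r)
  exact Fintype.linearIndependent_iff.mp hv (a · i) hi k

theorem exists_forall_dotProduct_ne_zero [Infinite K] [Fintype α] [Finite ι]
    (x : ι → α → K) : ∃ φ : α → K, ∀ j, x j ≠ 0 → φ ⬝ᵥ x j ≠ 0 := by
  classical
  by_contra! h
  let p : {j // x j ≠ 0} → Subspace K (α → K) :=
    fun j => LinearMap.ker (dotProductBilin K K (x j))
  obtain ⟨j, hj⟩ := Subspace.exists_eq_top_of_iUnion_eq_univ (p := p) <| Set.eq_univ_of_forall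
    fun φ => by
      obtain ⟨j, hxj, hφ⟩ := h φ
      exact Set.mem_iUnion.mpr ⟨⟨j, hxj⟩, by simp [p, dotProduct_comm, hφ]⟩
  refine j.2 (funext fun i => ?_)
  have : Pi.single i 1 ∈ p j := hj ▸ Submodule.mem_top
  simpa [p] using this

lemma exists_linearIndependent_comp_of_span_eq_top [Fintype β] [Finite ι] {f : ι → β → K}
    (hf : Submodule.span K (Set.range f) = ⊤) : ∃ σ : β → ι, LinearIndependent K (f ∘ σ) := by
  obtain ⟨κ, a, ha, hspan, hli⟩ := exists_linearIndependent' K f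
  have := Finite.of_injective a ha
  have := Fintype.ofFinite κ
  have hcard : Fintype.card κ = Fintype.card β := by
    rw [← finrank_span_eq_card hli, hspan, hf, finrank_top, Module.finrank_fintype_fun_eq_card]
  let e := Fintype.equivOfCardEq hcard
  exact ⟨a ∘ e.symm, hli.comp _ e.symm.injective⟩

lemma span_range_eq_top_of_isUnit_sum_vecMulVec [Fintype β] [DecidableEq β] [Fintype ι]
    {a b : ι → β → K} (h : IsUnit (∑ j, vecMulVec (a j) (b j))) :
    Submodule.span K (Set.range a) = ⊤ := by
  refine Submodule.eq_top_iff'.mpr fun w => ?_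
  obtain ⟨z, rfl⟩ := mulVec_surjective_iff_isUnit.mpr h w
  rw [sum_mulVec]
  refine Submodule.sum_mem _ fun j _ => ?_
  rw [vecMulVec_mulVec, op_smul_eq_smul]
  exact Submodule.smul_mem _ _ (Submodule.subset_span ⟨j, rfl⟩)

lemma span_range_eq_top_of_isUnit_partialTraceFst [StarRing K] [Fintype α] [Fintype β]
    [DecidableEq β] [Fintype ι] {x : ι → α → K} {y : ι → β → K}
    (h : IsUnit (partialTraceFst (∑ j, vecMulVec (x j ⊗ᵥ y j) (star (x j ⊗ᵥ y j))))) :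
    Submodule.span K (Set.range y) = ⊤ := by
  rw [partialTraceFst_sum_vecMulVec] at h
  refine top_le_iff.mp ?_
  rw [← span_range_eq_top_of_isUnit_sum_vecMulVec h, Submodule.span_le]
  rintro _ ⟨j, rfl⟩
  exact Submodule.smul_mem _ _ (Submodule.subset_span ⟨j, rfl⟩)

lemma rank_sum_vecMulVec_star [PartialOrder K] [StarRing K] [StarOrderedRing K] {m : Type*}
    [Fintype m] [Fintype ι] (v : ι → m → K) :
    (∑ j, vecMulVec (v j) (star (v j))).rank =
      Module.finrank K (Submodule.span K (Set.range v)) := by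
  have hv : ∑ j, vecMulVec (v j) (star (v j)) = (of v)ᵀ * (of v)ᵀᴴ :=
    (mul_conjTranspose_eq_sum_vecMulVec _).symm
  rw [hv, rank_self_mul_conjTranspose, rank_transpose, rank_eq_finrank_span_row]
  rfl

theorem exists_tensorVec_expansion [Fintype α] [Fintype β] [Fintype ι] (φ : α → K)
    (a : ι → α → K) (b : ι → β → K) (hφ : ∀ j, (φ ⬝ᵥ a j) • b j = b j)
    (hb : Submodule.span K (Set.range b) = ⊤)
    (hrank :
      Module.finrank K (Submodule.span K (Set.range fun j => a j ⊗ᵥ b j)) = Fintype.card β) :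
    ∃ (σ : β → ι) (c : ι → β → K), (∀ j, a j ⊗ᵥ b j = ∑ k, c j k • (a (σ k) ⊗ᵥ b (σ k))) ∧
      ∀ j k, c j k ≠ 0 → a (σ k) = a j := by
  classical
  set V := Submodule.span K (Set.range fun j => a j ⊗ᵥ b j)
  set L := contractFst β φ
  have hL : ∀ j, L (a j ⊗ᵥ b j) = b j := fun j => by rw [contractFst_tensorVec, hφ]
  have hinj : Set.InjOn L V := by
    have hsurj : Function.Surjective (L.domRestrict V) := by
      rw [← LinearMap.range_eq_top, LinearMap.range_domRestrict, Submodule.map_span,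
        ← Set.range_comp, ← hb]
      exact congrArg _ (congrArg _ (funext hL))
    have hinj := (LinearMap.injective_iff_surjective_of_finrank_eq_finrank
      (by rw [hrank, Module.finrank_fintype_fun_eq_card])).mpr hsurj
    exact fun w hw w' hw' h => congrArg Subtype.val (hinj (a₁ := ⟨w, hw⟩) (a₂ := ⟨w', hw'⟩) h)
  obtain ⟨σ, hσ⟩ := exists_linearIndependent_comp_of_span_eq_top hb
  let B := basisOfPiSpaceOfLinearIndependent hσ
  have hB : ∀ k, B k = b (σ k) := fun k => by simp [B]
  set c : ι → β → K := fun j => B.repr (b j)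
  have hc : ∀ j, ∑ k, c j k • b (σ k) = b j := fun j => by simp only [c, ← hB, B.sum_repr]
  have hexp : ∀ j, a j ⊗ᵥ b j = ∑ k, c j k • (a (σ k) ⊗ᵥ b (σ k)) := by
    intro j
    refine hinj (Submodule.subset_span ⟨j, rfl⟩)
      (Submodule.sum_mem _ fun k _ => Submodule.smul_mem _ _ (Submodule.subset_span ⟨σ k, rfl⟩)) ?_
    simp only [map_sum, map_smul, hL, hc]
  refine ⟨σ, c, hexp, fun j k hck => ?_⟩
  have hsum : ∑ k, (c j k • a j - c j k • a (σ k)) ⊗ᵥ b (σ k) = 0 :=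
    calc _ = a j ⊗ᵥ (∑ k, c j k • b (σ k)) - ∑ k, c j k • (a (σ k) ⊗ᵥ b (σ k)) := by
          simp only [tensorVec_sub, smul_tensorVec, tensorVec_smul, tensorVec_sum,
            Finset.sum_sub_distrib]
      _ = 0 := by rw [hc, ← hexp, sub_self]
  have := congrFun (hσ.eq_zero_of_sum_tensorVec_eq_zero hsum) k
  rw [Pi.zero_apply, ← smul_sub, smul_eq_zero] at this
  exact (sub_eq_zero.mp (this.resolve_left hck)).symm

end Field

section RCLike

variable {𝕜 : Type*} [RCLike 𝕜] {α β ι κ : Type*} [Fintype κ]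

open scoped MatrixOrder in
theorem Matrix.PosSemidef.exists_sum_vecMulVec_of_block {γ : Type*}
    {G : Matrix κ κ 𝕜} (hG : G.PosSemidef) (u : κ → γ) (hGu : ∀ k l, u k ≠ u l → G k l = 0) :
    ∃ h : κ → κ → 𝕜, G = ∑ k, vecMulVec (h k) (star (h k)) ∧ ∀ k l, h k l ≠ 0 → u l = u k := by
  classical
  set S := CFC.sqrt G
  have hS : S.IsHermitian := (CFC.sqrt_nonneg G).posSemidef.isHermitian
  -- the projection onto a block commutes with `G`, hence with its square root
  have hSu : ∀ k l, S k l ≠ 0 → u l = u k := by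
    intro k l hkl
    let P : Matrix κ κ 𝕜 := diagonal fun i => if u i = u k then 1 else 0
    have hPG : Commute G P := by
      ext i j
      by_cases hij : u i = u j
      · simp [P, hij]
      · simp [P, hGu i j hij]
    have := congrFun (congrFun (hPG.cfcₙ_nnreal NNReal.sqrt).eq k) l
    by_contra hne
    simp only [P, mul_diagonal, mul_ite, mul_one, mul_zero, diagonal_mul, ↓reduceIte, one_mul,
      ite_eq_left_iff] at this
    exact hkl (this hne).symm
  refine ⟨Sᵀ, ?_, fun k l hkl => (hSu l k hkl).symm⟩
  rw [← mul_conjTranspose_eq_sum_vecMulVec, hS.eq, CFC.sqrt_mul_sqrt_self G hG.nonneg]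

theorem exists_sum_vecMulVec_tensorVec_of_support [Fintype α] [Fintype β] [Fintype ι]
    (u : κ → α → 𝕜) (v : κ → β → 𝕜) (c : ι → κ → 𝕜) (w : ι → α → 𝕜)
    (hu : ∀ j k, c j k ≠ 0 → u k = w j) :
    ∃ b : κ → β → 𝕜,
      ∑ j, vecMulVec (∑ k, c j k • (u k ⊗ᵥ v k)) (star (∑ k, c j k • (u k ⊗ᵥ v k))) =
        ∑ k, vecMulVec (u k ⊗ᵥ b k) (star (u k ⊗ᵥ b k)) := by
  classical
  set B : Matrix (α × β) κ 𝕜 := of fun p k => (u k ⊗ᵥ v k) p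
  have hB : ∀ c : κ → 𝕜, B *ᵥ c = ∑ k, c k • (u k ⊗ᵥ v k) := fun c => by
    ext p; simp [B, mulVec, dotProduct, Finset.sum_apply, mul_comm]
  set G := ∑ j, vecMulVec (c j) (star (c j))
  have hG : G.PosSemidef := posSemidef_sum _ fun j _ => posSemidef_vecMulVec_self_star (c j)
  have hGu : ∀ k l, u k ≠ u l → G k l = 0 := by
    intro k l hkl
    refine (Matrix.sum_apply _ _ _ _).trans (Finset.sum_eq_zero fun j _ => ?_)
    by_contra hjkl
    obtain ⟨hk, hl⟩ := mul_ne_zero_iff.mp hjkl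
    exact hkl ((hu j k hk).trans (hu j l (by simpa using hl)).symm)
  obtain ⟨h, hGh, hh⟩ := hG.exists_sum_vecMulVec_of_block u hGu
  refine ⟨fun k => ∑ l, h k l • v l, ?_⟩
  have hBh : ∀ k, B *ᵥ h k = u k ⊗ᵥ ∑ l, h k l • v l := by
    intro k
    rw [hB, tensorVec_sum]
    refine Finset.sum_congr rfl fun l _ => ?_
    by_cases hkl : h k l = 0
    · simp [hkl]
    · rw [tensorVec_smul, hh k l hkl]
  calc _ = B * G * Bᴴ := by
        simp only [← hB, vecMulVec_mulVec_star, G, Matrix.mul_sum, Matrix.sum_mul]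
    _ = _ := by
        simp only [hGh, Matrix.mul_sum, Matrix.sum_mul, ← vecMulVec_mulVec_star, hBh]

end RCLike

theorem stmt13_general {d n m : ℕ}
    (C : Matrix (Fin d × Fin n) (Fin d × Fin n) ℂ)
    (hrank : C.rank = n)
    -- the partial trace over the first factor is invertible
    (hpt : IsUnit (Matrix.of fun r s : Fin n => ∑ i : Fin d, C (i, r) (i, s)))
    (x : Fin m → (Fin d → ℂ)) (y : Fin m → (Fin n → ℂ))
    (ξ : Fin m → (Fin d × Fin n → ℂ))
    (hξ : ∀ j, ξ j = fun p => x j p.1 * y j p.2)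
    (hdecomp : C = ∑ j, vecMulVec (ξ j) (star (ξ j))) :
    m ≥ n ∧
    ∃ (a : Fin n → (Fin d → ℂ)) (b : Fin n → (Fin n → ℂ)),
      C = ∑ k, vecMulVec (fun p => a k p.1 * b k p.2)
        (star fun p => a k p.1 * b k p.2) := by
  classical
  obtain ⟨φ, hφ⟩ := exists_forall_dotProduct_ne_zero x
  set x' := fun j => (φ ⬝ᵥ x j)⁻¹ • x j
  set y' := fun j => (φ ⬝ᵥ x j) • y j
  have hξ' : ∀ j, ξ j = x' j ⊗ᵥ y' j := by
    intro j
    rw [hξ j]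
    change x j ⊗ᵥ y j = _
    simp only [x', y', smul_tensorVec, tensorVec_smul, smul_smul]
    rcases eq_or_ne (x j) 0 with hx | hx
    · simp [hx]
    · rw [mul_inv_cancel₀ (hφ j hx), one_smul]
  have hnorm : ∀ j, (φ ⬝ᵥ x' j) • y' j = y' j := fun j => by
    rcases eq_or_ne (φ ⬝ᵥ x j) 0 with h | h <;> simp [x', y', h, smul_smul]
  simp only [hξ'] at hdecomp
  subst hdecomp
  have hspan := span_range_eq_top_of_isUnit_partialTraceFst hpt
  rw [rank_sum_vecMulVec_star] at hrank
  refine ⟨?_, ?_⟩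
  · exact hrank ▸ (finrank_range_le_card (R := ℂ) _).trans_eq (Fintype.card_fin m)
  obtain ⟨σ, c, hexp, hc⟩ :=
    exists_tensorVec_expansion φ x' y' hnorm hspan (hrank.trans (Fintype.card_fin n).symm)
  obtain ⟨b, hb⟩ := exists_sum_vecMulVec_tensorVec_of_support (x' ∘ σ) (y' ∘ σ) c x' hc
  exact ⟨x' ∘ σ, b, (Finset.sum_congr rfl fun j _ => by rw [hexp j]; rfl).trans hb⟩

theorem stmt13 {d n m : ℕ}
    (C : Matrix (Fin d × Fin n) (Fin d × Fin n) ℂ)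
    (hC : C.PosSemidef)
    (hrank : C.rank = n)
    -- the partial trace over the first factor is invertible
    (hpt : IsUnit (Matrix.of fun r s : Fin n => ∑ i : Fin d, C (i, r) (i, s)))
    (x : Fin m → (Fin d → ℂ)) (y : Fin m → (Fin n → ℂ))
    (ξ : Fin m → (Fin d × Fin n → ℂ))
    (hξ : ∀ j, ξ j = fun p => x j p.1 * y j p.2)
    (hdecomp : C = ∑ j, vecMulVec (ξ j) (star (ξ j))) :
    m ≥ n ∧
    ∃ (a : Fin n → (Fin d → ℂ)) (b : Fin n → (Fin n → ℂ)),
      C = ∑ k, vecMulVec (fun p => a k p.1 * b k p.2)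
        (star fun p => a k p.1 * b k p.2) :=
  stmt13_general C hrank hpt x y ξ hξ hdecomp
end
end

section
/- Let Φ : M_d(ℂ) → M_n(ℂ) be unital with Φ(X) = ∑_{j=1}^n (v_j u_j*) X (u_j v_j*) where u_j ∈ ℂ^d are unit vectors and v_j ∈ ℂⁿ. Then {v_1, …, v_n} is an orthonormal basis of ℂⁿ, and grouping indices with equal u_j yields Φ(X) = ∑_{k=1}^ℓ φ_k(X) P_k where φ_k(X) = ⟨X u_{j_k}, u_{j_k}⟩ are distinct vector states and P_k are mutually orthogonal projections with ∑_k P_k = I_n. -/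
open Matrix BigOperators
open scoped ComplexOrder

noncomputable section

lemma aux_vmv_mul_vmv {m p q : Type*} [Fintype p] (a : m → ℂ) (b c : p → ℂ) (e : q → ℂ) :
    vecMulVec a b * vecMulVec c e = (b ⬝ᵥ c) • vecMulVec a e := by
  ext i j
  simp [mul_apply, vecMulVec_apply, dotProduct, Finset.sum_mul, Finset.mul_sum]
  apply Finset.sum_congr rfl
  intro k _
  ring

lemma aux_vmv_X_vmv {m p q r : Type*} [Fintype p] [Fintype q]
    (a : m → ℂ) (b : p → ℂ) (X : Matrix p q ℂ) (c : q → ℂ) (e : r → ℂ) :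
    vecMulVec a b * X * vecMulVec c e = (b ⬝ᵥ (X *ᵥ c)) • vecMulVec a e := by
  ext i j
  simp [mul_apply, vecMulVec_apply, dotProduct, mulVec, Finset.sum_mul, Finset.mul_sum]
  rw [Finset.sum_comm]
  apply Finset.sum_congr rfl
  intro k _
  apply Finset.sum_congr rfl
  intro l _
  ring

theorem stmt15 {d n : ℕ}
    (Φ : Matrix (Fin d) (Fin d) ℂ →ₗ[ℂ] Matrix (Fin n) (Fin n) ℂ)
    (hunital : Φ 1 = 1)
    (u : Fin n → (Fin d → ℂ)) (hu : ∀ j, star (u j) ⬝ᵥ u j = 1)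
    (v : Fin n → (Fin n → ℂ))
    (hΦ : ∀ X, Φ X = ∑ j,
      vecMulVec (v j) (star (u j)) * X * vecMulVec (u j) (star (v j))) :
    -- the `v_j` form an orthonormal basis of `ℂⁿ`
    (∀ i j, star (v i) ⬝ᵥ v j = if i = j then 1 else 0) ∧
    -- grouping indices with equal `u_j` gives a projection-valued form
    ∃ (ℓ : ℕ) (jrep : Fin ℓ → Fin n) (P : Fin ℓ → Matrix (Fin n) (Fin n) ℂ),
      (∀ k k', (∀ X : Matrix (Fin d) (Fin d) ℂ,
          star (u (jrep k)) ⬝ᵥ (X *ᵥ u (jrep k)) =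
          star (u (jrep k')) ⬝ᵥ (X *ᵥ u (jrep k'))) → k = k') ∧
      (∀ k, P k * P k = P k ∧ (P k)ᴴ = P k) ∧
      (∀ k k', k ≠ k' → P k * P k' = 0) ∧
      (∑ k, P k = 1) ∧
      (∀ X, Φ X = ∑ k, (star (u (jrep k)) ⬝ᵥ (X *ᵥ u (jrep k))) • P k) := by
  classical
  -- rank-one form of Φ
  have key : ∀ X, Φ X = ∑ j, (star (u j) ⬝ᵥ (X *ᵥ u j)) • vecMulVec (v j) (star (v j)) := by
    intro X
    rw [hΦ]
    exact Finset.sum_congr rfl fun j _ => aux_vmv_X_vmv _ _ _ _ _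
  -- ∑ v_j v_j* = 1
  have hsum1 : ∑ j, vecMulVec (v j) (star (v j)) = (1 : Matrix (Fin n) (Fin n) ℂ) := by
    have h := (key 1).symm
    rw [hunital] at h
    rw [← h]
    apply Finset.sum_congr rfl
    intro j _
    rw [one_mulVec, hu j, one_smul]
  -- orthonormality
  set W : Matrix (Fin n) (Fin n) ℂ := Matrix.of (fun i j => v j i) with hW
  have hWWH : W * Wᴴ = 1 := by
    rw [← hsum1]
    ext i k
    simp [mul_apply, conjTranspose_apply, vecMulVec_apply, hW, Matrix.sum_apply]
  have hWHW : Wᴴ * W = 1 := mul_eq_one_comm.mp hWWH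
  have horth : ∀ i j, star (v i) ⬝ᵥ v j = if i = j then 1 else 0 := by
    intro i j
    have h := congrArg (fun M : Matrix (Fin n) (Fin n) ℂ => M i j) hWHW
    simpa [mul_apply, conjTranspose_apply, dotProduct, one_apply, hW] using h
  refine ⟨horth, ?_⟩
  -- grouping
  set f : Fin n → (Matrix (Fin d) (Fin d) ℂ → ℂ) :=
    fun j X => star (u j) ⬝ᵥ (X *ᵥ u j) with hf
  set S : Finset (Matrix (Fin d) (Fin d) ℂ → ℂ) := Finset.image f Finset.univ with hS
  set ℓ : ℕ := S.card with hℓ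
  have hmem : ∀ k : Fin ℓ, (↑(S.equivFin.symm k) : Matrix (Fin d) (Fin d) ℂ → ℂ) ∈ S :=
    fun k => (S.equivFin.symm k).2
  set jrep : Fin ℓ → Fin n := fun k =>
    (Finset.mem_image.mp (hmem k)).choose with hjrepdef
  have hjrep : ∀ k, f (jrep k) = ↑(S.equivFin.symm k) := by
    intro k
    exact (Finset.mem_image.mp (hmem k)).choose_spec.2
  set A : Fin ℓ → Finset (Fin n) := fun k => Finset.univ.filter (fun j => f j = f (jrep k))
    with hA
  set P : Fin ℓ → Matrix (Fin n) (Fin n) ℂ :=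
    fun k => ∑ j ∈ A k, vecMulVec (v j) (star (v j)) with hP
  -- products of P's
  have hmulP : ∀ k k', P k * P k' = ∑ i ∈ A k ∩ A k', vecMulVec (v i) (star (v i)) := by
    intro k k'
    rw [hP]
    simp only
    rw [Finset.sum_mul_sum]
    have : ∀ i ∈ A k, ∀ j ∈ A k',
        vecMulVec (v i) (star (v i)) * vecMulVec (v j) (star (v j)) =
        if i = j then vecMulVec (v i) (star (v i)) else 0 := by
      intro i _ j _
      rw [aux_vmv_mul_vmv, horth]
      split
      · subst ‹i = j›; rw [one_smul]
      · rw [zero_smul]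
    calc (∑ i ∈ A k, ∑ j ∈ A k', vecMulVec (v i) (star (v i)) * vecMulVec (v j) (star (v j)))
        = ∑ i ∈ A k, ∑ j ∈ A k', if i = j then vecMulVec (v i) (star (v i)) else 0 := by
          exact Finset.sum_congr rfl fun i hi => Finset.sum_congr rfl fun j hj => this i hi j hj
      _ = ∑ i ∈ A k, if i ∈ A k' then vecMulVec (v i) (star (v i)) else 0 := by
          exact Finset.sum_congr rfl fun i _ => Finset.sum_ite_eq (A k') i _
      _ = ∑ i ∈ A k ∩ A k', vecMulVec (v i) (star (v i)) := by
          rw [Finset.sum_ite_mem]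
  -- distinct representatives
  have hdist : ∀ k k' : Fin ℓ, f (jrep k) = f (jrep k') → k = k' := by
    intro k k' h
    have : S.equivFin.symm k = S.equivFin.symm k' := by
      apply Subtype.ext
      rw [← hjrep, ← hjrep, h]
    exact S.equivFin.symm.injective this
  refine ⟨ℓ, jrep, P, ?_, ?_, ?_, ?_, ?_⟩
  · intro k k' h
    exact hdist k k' (funext h)
  · intro k
    constructor
    · rw [hmulP, Finset.inter_self]
    · rw [hP]
      simp only
      rw [conjTranspose_sum]
      apply Finset.sum_congr rfl
      intro j _
      ext a b
      simp [conjTranspose_apply, vecMulVec_apply, mul_comm]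
  · intro k k' hkk'
    rw [hmulP]
    have : A k ∩ A k' = ∅ := by
      rw [Finset.eq_empty_iff_forall_notMem]
      intro i hi
      rw [Finset.mem_inter, hA] at hi
      simp only [Finset.mem_filter, Finset.mem_univ, true_and] at hi
      exact hkk' (hdist k k' (hi.1 ▸ hi.2 ▸ rfl))
    rw [this, Finset.sum_empty]
  · -- fiberwise decomposition of the identity
    have hfib : ∀ (g : Fin n → Matrix (Fin n) (Fin n) ℂ),
        ∑ k : Fin ℓ, ∑ j ∈ A k, g j = ∑ j, g j := by
      intro g
      have h1 : ∑ k : Fin ℓ, ∑ j ∈ A k, g j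
          = ∑ b ∈ S, ∑ j ∈ Finset.univ.filter (fun j => f j = b), g j := by
        rw [← Finset.sum_coe_sort S (fun b => ∑ j ∈ Finset.univ.filter (fun j => f j = ↑b), g j)]
        rw [← Equiv.sum_comp S.equivFin.symm
          (fun b => ∑ j ∈ Finset.univ.filter (fun j => f j = ↑b), g j)]
        apply Finset.sum_congr rfl
        intro k _
        rw [hA]
        simp only [hjrep k]
      rw [h1]
      exact Finset.sum_fiberwise_of_maps_to (fun j _ => Finset.mem_image_of_mem f
        (Finset.mem_univ j)) g
    rw [hP]
    simp only
    rw [hfib, hsum1]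
  · intro X
    rw [key X]
    have : ∀ k, (star (u (jrep k)) ⬝ᵥ (X *ᵥ u (jrep k))) • P k
        = ∑ j ∈ A k, (star (u j) ⬝ᵥ (X *ᵥ u j)) • vecMulVec (v j) (star (v j)) := by
      intro k
      rw [hP]
      simp only
      rw [Finset.smul_sum]
      apply Finset.sum_congr rfl
      intro j hj
      rw [hA] at hj
      simp only [Finset.mem_filter, Finset.mem_univ, true_and] at hj
      have : f j X = f (jrep k) X := by rw [hj]
      rw [hf] at this
      simp only at this
      rw [this]
    rw [Finset.sum_congr rfl (fun k _ => this k)]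
    have hfib : ∀ (g : Fin n → Matrix (Fin n) (Fin n) ℂ),
        ∑ k : Fin ℓ, ∑ j ∈ A k, g j = ∑ j, g j := by
      intro g
      have h1 : ∑ k : Fin ℓ, ∑ j ∈ A k, g j
          = ∑ b ∈ S, ∑ j ∈ Finset.univ.filter (fun j => f j = b), g j := by
        rw [← Finset.sum_coe_sort S (fun b => ∑ j ∈ Finset.univ.filter (fun j => f j = ↑b), g j)]
        rw [← Equiv.sum_comp S.equivFin.symm
          (fun b => ∑ j ∈ Finset.univ.filter (fun j => f j = ↑b), g j)]
        apply Finset.sum_congr rfl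
        intro k _
        rw [hA]
        simp only [hjrep k]
      rw [h1]
      exact Finset.sum_fiberwise_of_maps_to (fun j _ => Finset.mem_image_of_mem f
        (Finset.mem_univ j)) g
    rw [hfib]
end
end
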